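/- arXiv:2207.06727 — 3 statements merged into one kernel-verified Lean document; each statement's English description precedes it below -/
import Mathlib

section
/- For an m-dimensional subspace Z of an n-dimensional vector space V over F_q, with l a positive integer satisfying m + l ≤ n, the number of l-dimensional subspaces W of V with Z ∩ W = {0} equals q^{lm} · [n-m choose l]_q, where [· choose ·]_q denotes the Gaussian binomial coefficient. -/
open Module Set

/-- The Gaussian (q-)binomial coefficient, via the standard Pascal-type recurrence. -/
def gbinom (q : ℕ) : ℕ → ℕ → ℕ
  | _, 0 => 1
  | 0, _ + 1 => 0
  | n + 1, k + 1 => gbinom q n k + q ^ (k + 1) * gbinom q n (k + 1)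


/-- Auxiliary product `∏_{i<l} (q^{i+1} - 1)`. -/
def gP (q l : ℕ) : ℕ := ∏ i ∈ Finset.range l, (q ^ (i + 1) - 1)

@[simp] lemma gP_zero (q : ℕ) : gP q 0 = 1 := rfl

lemma gP_succ (q l : ℕ) : gP q (l + 1) = gP q l * (q ^ (l + 1) - 1) :=
  Finset.prod_range_succ _ _

lemma gP_pos {q : ℕ} (hq : 2 ≤ q) (l : ℕ) : 0 < gP q l := by
  apply Finset.prod_pos
  intro i _
  have : 2 ^ (i + 1) ≤ q ^ (i + 1) := Nat.pow_le_pow_left hq _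
  have h2 : 2 ≤ 2 ^ (i + 1) := by
    calc 2 = 2 ^ 1 := rfl
    _ ≤ 2 ^ (i + 1) := Nat.pow_le_pow_right (by norm_num) (by omega)
  omega

lemma gbinom_zero_right (q d : ℕ) : gbinom q d 0 = 1 := by cases d <;> rfl

lemma gbinom_eq_zero (q : ℕ) : ∀ d l : ℕ, d < l → gbinom q d l = 0 := by
  intro d
  induction d with
  | zero => intro l hl; match l, hl with | (k+1), _ => rfl
  | succ d ih =>
    intro l hl
    match l, hl with
    | (k+1), hl =>
      show gbinom q d k + q ^ (k+1) * gbinom q d (k+1) = 0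
      rw [ih k (by omega), ih (k+1) (by omega)]
      simp

lemma gbinom_self (q : ℕ) : ∀ d : ℕ, gbinom q d d = 1 := by
  intro d
  induction d with
  | zero => rfl
  | succ d ih =>
    show gbinom q d d + q ^ (d+1) * gbinom q d (d+1) = 1
    rw [ih, gbinom_eq_zero q d (d+1) (by omega)]
    simp

lemma gbinom_key (q : ℕ) : ∀ d l : ℕ, l ≤ d →
    gbinom q d l * (gP q l * gP q (d - l)) = gP q d := by
  intro d
  induction d with
  | zero => intro l hl; interval_cases l; simp [gbinom_zero_right]
  | succ d ih =>
    intro l hl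
    match l with
    | 0 => simp [gbinom_zero_right]
    | (k+1) =>
      show (gbinom q d k + q ^ (k+1) * gbinom q d (k+1)) * _ = _
      rcases Nat.lt_or_ge k d with hkd | hkd
      · -- k + 1 ≤ d
        have h1 : gbinom q d k * (gP q k * gP q (d - k)) = gP q d := ih k (by omega)
        have h2 : gbinom q d (k+1) * (gP q (k+1) * gP q (d - (k+1))) = gP q d :=
          ih (k+1) (by omega)
        have e1 : d + 1 - (k + 1) = d - k := by omega
        have e2 : gP q (d - k) = gP q (d - (k+1)) * (q ^ (d - k) - 1) := by
          have : d - k = (d - (k+1)) + 1 := by omega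
          rw [this, gP_succ]
        have e3 : gP q (d+1) = gP q d * (q ^ (d + 1) - 1) := gP_succ q d
        rw [e1, Nat.add_mul]
        have t1 : gbinom q d k * (gP q (k+1) * gP q (d - k))
            = gP q d * (q ^ (k+1) - 1) := by
          calc gbinom q d k * (gP q (k+1) * gP q (d - k))
              = gbinom q d k * (gP q k * gP q (d - k)) * (q ^ (k+1) - 1) := by
                rw [gP_succ]; ring
            _ = gP q d * (q ^ (k+1) - 1) := by rw [h1]
        have t2 : q ^ (k+1) * gbinom q d (k+1) * (gP q (k+1) * gP q (d - k))
            = gP q d * (q ^ (k+1) * (q ^ (d - k) - 1)) := by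
          calc q ^ (k+1) * gbinom q d (k+1) * (gP q (k+1) * gP q (d - k))
              = gbinom q d (k+1) * (gP q (k+1) * gP q (d - (k+1))) * (q ^ (k+1) * (q ^ (d - k) - 1)) := by
                rw [e2]; ring
            _ = gP q d * (q ^ (k+1) * (q ^ (d - k) - 1)) := by rw [h2]
        rw [t1, t2, ← Nat.mul_add, e3]
        congr 1
        rcases Nat.eq_zero_or_pos q with h | h
        · subst h; simp
        have h1q : 1 ≤ q ^ (k+1) := Nat.one_le_pow _ _ h
        have h2q : 1 ≤ q ^ (d-k) := Nat.one_le_pow _ _ h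
        have hmul : q ^ (k+1) * q ^ (d - k) = q ^ (d+1) := by
          rw [← pow_add]; congr 1; omega
        have h3q : 1 ≤ q ^ (k+1) * q ^ (d - k) := le_trans h1q (Nat.le_mul_of_pos_right _ h2q)
        rw [← hmul]
        zify [h1q, h2q, h3q]
        ring
      · -- here k = d, l = d + 1
        have hk : k = d := by omega
        subst hk
        rw [gbinom_eq_zero q k (k+1) (by omega), gbinom_self]
        simp [Nat.sub_self]

lemma gP_shift (q : ℕ) : ∀ l a : ℕ, l ≤ a →
    gP q (a - l) * ∏ i ∈ Finset.range l, (q ^ (a - i) - 1) = gP q a := by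
  intro l
  induction l with
  | zero => intro a _; simp [gP]
  | succ l ih =>
    intro a ha
    rw [Finset.prod_range_succ]
    have e : gP q (a - (l + 1)) * (q ^ (a - l) - 1) = gP q (a - l) := by
      have h1 : a - l = (a - (l + 1)) + 1 := by omega
      rw [h1, gP_succ]
    calc gP q (a - (l + 1)) * ((∏ i ∈ Finset.range l, (q ^ (a - i) - 1)) * (q ^ (a - l) - 1))
        = (gP q (a - (l + 1)) * (q ^ (a - l) - 1)) * ∏ i ∈ Finset.range l, (q ^ (a - i) - 1) := by
          ring
      _ = gP q (a - l) * ∏ i ∈ Finset.range l, (q ^ (a - i) - 1) := by rw [e]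
      _ = gP q a := ih a (by omega)

lemma gbinom_mul_prod {q d l : ℕ} (hq : 2 ≤ q) (h : l ≤ d) :
    gbinom q d l * ∏ i ∈ Finset.range l, (q ^ l - q ^ i)
      = ∏ i ∈ Finset.range l, (q ^ d - q ^ i) := by
  have fact : ∀ a : ℕ, l ≤ a → ∏ i ∈ Finset.range l, (q ^ a - q ^ i)
      = (∏ i ∈ Finset.range l, q ^ i) * ∏ i ∈ Finset.range l, (q ^ (a - i) - 1) := by
    intro a ha
    rw [← Finset.prod_mul_distrib]
    refine Finset.prod_congr rfl fun i hi => ?_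
    have hil : i < l := Finset.mem_range.mp hi
    rw [Nat.mul_sub, mul_one, ← pow_add]
    congr 2
    omega
  have hQl : ∏ i ∈ Finset.range l, (q ^ (l - i) - 1) = gP q l := by
    show _ = ∏ i ∈ Finset.range l, (q ^ (i + 1) - 1)
    rw [← Finset.prod_range_reflect (fun j => q ^ (j + 1) - 1) l]
    refine Finset.prod_congr rfl fun i hi => ?_
    have hil : i < l := Finset.mem_range.mp hi
    congr 2
    omega
  have key : gbinom q d l * ∏ i ∈ Finset.range l, (q ^ (l - i) - 1)
      = ∏ i ∈ Finset.range l, (q ^ (d - i) - 1) := by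
    apply Nat.eq_of_mul_eq_mul_right (gP_pos hq (d - l))
    calc gbinom q d l * (∏ i ∈ Finset.range l, (q ^ (l - i) - 1)) * gP q (d - l)
        = gbinom q d l * (gP q l * gP q (d - l)) := by rw [hQl]; ring
      _ = gP q d := gbinom_key q d l h
      _ = (∏ i ∈ Finset.range l, (q ^ (d - i) - 1)) * gP q (d - l) := by
          rw [← gP_shift q l d h]; ring
  rw [fact l le_rfl, fact d h]
  calc gbinom q d l * ((∏ i ∈ Finset.range l, q ^ i) * ∏ i ∈ Finset.range l, (q ^ (l - i) - 1))
      = (∏ i ∈ Finset.range l, q ^ i)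
        * (gbinom q d l * ∏ i ∈ Finset.range l, (q ^ (l - i) - 1)) := by ring
    _ = (∏ i ∈ Finset.range l, q ^ i) * ∏ i ∈ Finset.range l, (q ^ (d - i) - 1) := by rw [key]


section helpers

variable {K V : Type*} [Field K] [AddCommGroup V] [Module K V]

lemma li_comp_subtype_iff {Z C : Submodule K V} (hd : Disjoint Z C) {ι : Type*}
    (c : ι → C) : LinearIndependent K ((Z.mkQ ∘ₗ C.subtype) ∘ c) ↔ LinearIndependent K c := by
  apply LinearMap.linearIndependent_iff
  rw [LinearMap.ker_comp, Submodule.ker_mkQ, Submodule.eq_bot_iff]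
  intro x hx
  exact Subtype.ext (Submodule.disjoint_def.mp hd _ (Submodule.mem_comap.mp hx) x.2)

lemma li_mkQ_iff {Z C : Submodule K V} (hC : IsCompl Z C) {ι : Type*} (z : ι → Z) (c : ι → C) :
    LinearIndependent K (Z.mkQ ∘ fun i => (z i : V) + (c i : V)) ↔ LinearIndependent K c := by
  have : (Z.mkQ ∘ fun i => (z i : V) + (c i : V)) = (Z.mkQ ∘ₗ C.subtype) ∘ c := by
    funext i
    simp [map_add, show Z.mkQ (z i : V) = 0 from (Submodule.Quotient.mk_eq_zero Z).2 (z i).2]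
  rw [this]
  exact li_comp_subtype_iff hC.disjoint c

end helpers

theorem stmt_0' (q n m l : ℕ) (K : Type*) [Field K] [Fintype K] (hK : Fintype.card K = q)
    (V : Type*) [AddCommGroup V] [Module K V] [FiniteDimensional K V]
    (hV : finrank K V = n) (Z : Submodule K V) (hZ : finrank K Z = m)
    (hl : 1 ≤ l) (hml : m + l ≤ n) :
    {W : Submodule K V | finrank K W = l ∧ Z ⊓ W = ⊥}.ncard * ∏ i ∈ Finset.range l, (q ^ l - q ^ i)
      = q ^ (l * m) * ∏ i ∈ Finset.range l, (q ^ (n - m) - q ^ i) := by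
  classical
  haveI : Nonempty (Fin l) := ⟨⟨0, hl⟩⟩
  have hfinV : Finite V := Module.finite_of_finite K
  letI : Fintype V := Fintype.ofFinite V
  have hfinSub : Finite (Submodule K V) :=
    Finite.of_injective (fun W => (W : Set V)) SetLike.coe_injective
  obtain ⟨C, hC⟩ := Submodule.exists_isCompl Z
  have hCrank : finrank K C = n - m := by
    have := Submodule.finrank_add_eq_of_isCompl hC
    rw [hZ, hV] at this
    omega
  -- the set of tuples that are linearly independent modulo Z
  set S := { v : Fin l → V // LinearIndependent K (Z.mkQ ∘ v) } with hS
  -- Step A : card S = q^(l*m) * B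
  have hsplit : ∀ (a : Z) (b : C),
      (Submodule.prodEquivOfIsCompl Z C hC).symm ((a : V) + (b : V)) = (a, b) := by
    intro a b
    rw [LinearEquiv.symm_apply_eq]
    simp
  have hsum : ∀ x : V, (((Submodule.prodEquivOfIsCompl Z C hC).symm x).1 : V)
      + (((Submodule.prodEquivOfIsCompl Z C hC).symm x).2 : V) = x := fun x =>
    (Submodule.coe_prodEquivOfIsCompl' Z C hC _).symm.trans
      ((Submodule.prodEquivOfIsCompl Z C hC).apply_symm_apply x)
  have hkey : ∀ x : V, Z.mkQ ((((Submodule.prodEquivOfIsCompl Z C hC).symm x).2 : V)) = Z.mkQ x := by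
    intro x
    conv_rhs => rw [← hsum x]
    rw [map_add, show Z.mkQ ((((Submodule.prodEquivOfIsCompl Z C hC).symm x).1 : V)) = 0 from
      (Submodule.Quotient.mk_eq_zero Z).2 ((Submodule.prodEquivOfIsCompl Z C hC).symm x).1.2,
      zero_add]
  have eA : S ≃ (Fin l → Z) × { c : Fin l → C // LinearIndependent K c } :=
  { toFun := fun v =>
      ⟨fun i => ((Submodule.prodEquivOfIsCompl Z C hC).symm (v.1 i)).1,
       ⟨fun i => ((Submodule.prodEquivOfIsCompl Z C hC).symm (v.1 i)).2, by
          rw [← li_comp_subtype_iff hC.disjoint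
            (fun i => ((Submodule.prodEquivOfIsCompl Z C hC).symm (v.1 i)).2)]
          have heq : (Z.mkQ ∘ₗ C.subtype) ∘
              (fun i => ((Submodule.prodEquivOfIsCompl Z C hC).symm (v.1 i)).2) = Z.mkQ ∘ v.1 :=
            funext fun i => hkey (v.1 i)
          rw [heq]
          exact v.2⟩⟩,
    invFun := fun p =>
      ⟨fun i => ((p.1 i : V) + (p.2.1 i : V)), (li_mkQ_iff hC p.1 p.2.1).mpr p.2.2⟩,
    left_inv := fun v => Subtype.ext (funext fun i => hsum (v.1 i)),
    right_inv := fun p => by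
      refine Prod.ext (funext fun i => ?_) (Subtype.ext (funext fun i => ?_))
      · exact congrArg Prod.fst (hsplit (p.1 i) (p.2.1 i))
      · exact congrArg Prod.snd (hsplit (p.1 i) (p.2.1 i)) }
  have cardZ : Nat.card Z = q ^ m := by
    rw [Nat.card_eq_fintype_card, card_eq_pow_finrank (K := K) (V := Z), hK, hZ]
  have cardLI_C : Nat.card { c : Fin l → C // LinearIndependent K c }
      = ∏ i ∈ Finset.range l, (q ^ (n - m) - q ^ i) := by
    rw [card_linearIndependent (K := K) (V := C) (by rw [hCrank]; omega), hK, hCrank,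
      ← Fin.prod_univ_eq_prod_range]
  have cardS : Nat.card S = q ^ (l * m) * ∏ i ∈ Finset.range l, (q ^ (n - m) - q ^ i) := by
    rw [Nat.card_congr eA, Nat.card_prod, cardLI_C, Nat.card_fun, cardZ, Nat.card_eq_fintype_card,
      Fintype.card_fin, ← pow_mul, mul_comm m l]
  -- Step B : card S = ncard * A
  set P : Submodule K V → Prop := fun W => finrank K W = l ∧ Z ⊓ W = ⊥ with hP
  have hLI_of_S : ∀ v : S, LinearIndependent K v.1 := fun v => v.2.of_comp Z.mkQ
  have hFmem : ∀ v : S, P (Submodule.span K (Set.range v.1)) := by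
    intro v
    constructor
    · rw [finrank_span_eq_card (hLI_of_S v), Fintype.card_fin]
    · rw [Submodule.eq_bot_iff]
      intro x hx
      obtain ⟨hxZ, hxS⟩ := Submodule.mem_inf.mp hx
      obtain ⟨g, hg⟩ := Submodule.mem_span_range_iff_exists_fun K |>.mp hxS
      have h0 : ∑ i, g i • (Z.mkQ ∘ v.1) i = 0 := by
        have := congrArg Z.mkQ hg
        rw [map_sum] at this
        simp only [map_smul] at this
        simp only [Function.comp_apply]
        rw [this]
        exact (Submodule.Quotient.mk_eq_zero Z).2 hxZ
      have hg0 : ∀ i, g i = 0 := Fintype.linearIndependent_iff.mp v.2 g h0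
      rw [← hg]
      simp [hg0]
  set F : S → {W : Submodule K V // P W} := fun v => ⟨Submodule.span K (Set.range v.1), hFmem v⟩
    with hF
  have fibE : ∀ W : {W : Submodule K V // P W},
      {v : S // F v = W} ≃ {w : Fin l → W.1 // LinearIndependent K w} := by
    intro W
    refine
    { toFun := fun v =>
        ⟨fun i => ⟨v.1.1 i, ?_⟩, ?_⟩,
      invFun := fun w =>
        ⟨⟨fun i => (w.1 i : V), ?_⟩, ?_⟩,
      left_inv := fun v => Subtype.ext (Subtype.ext (funext fun i => rfl)),
      right_inv := fun w => Subtype.ext (funext fun i => Subtype.ext rfl) }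
    · have hspan : Submodule.span K (Set.range v.1.1) = W.1 := congrArg Subtype.val v.2
      rw [← hspan]
      exact Submodule.subset_span (Set.mem_range_self i)
    · apply LinearIndependent.of_comp W.1.subtype
      exact hLI_of_S v.1
    · exact (li_comp_subtype_iff (by
        rw [disjoint_iff]
        exact W.2.2) w.1).mpr w.2
    · apply Subtype.ext
      show Submodule.span K (Set.range fun i => (w.1 i : V)) = W.1
      have hb := coe_basisOfLinearIndependentOfCardEqFinrank w.2
        (by rw [Fintype.card_fin, W.2.1])
      have htop : Submodule.span K (Set.range w.1) = ⊤ := by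
        rw [← hb]
        exact Basis.span_eq _
      have : (Set.range fun i => (w.1 i : V)) = W.1.subtype '' Set.range w.1 := by
        rw [← Set.range_comp]
        rfl
      rw [this, ← Submodule.map_span, htop, Submodule.map_top, Submodule.range_subtype]
  letI : Fintype {W : Submodule K V // P W} := Fintype.ofFinite _
  have cardS' : Nat.card S
      = Nat.card {W : Submodule K V // P W} * ∏ i ∈ Finset.range l, (q ^ l - q ^ i) := by
    have h1 : Nat.card S = ∑ W : {W : Submodule K V // P W}, Nat.card {v : S // F v = W} := by
      rw [← Nat.card_congr (Equiv.sigmaFiberEquiv F)]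
      letI : Fintype S := Fintype.ofFinite _
      letI : ∀ W : {W : Submodule K V // P W}, Fintype {v : S // F v = W} :=
        fun W => Fintype.ofFinite _
      rw [Nat.card_eq_fintype_card, Fintype.card_sigma]
      exact Finset.sum_congr rfl fun W _ => (Nat.card_eq_fintype_card).symm
    rw [h1]
    have h2 : ∀ W : {W : Submodule K V // P W},
        Nat.card {v : S // F v = W} = ∏ i ∈ Finset.range l, (q ^ l - q ^ i) := by
      intro W
      rw [Nat.card_congr (fibE W),
        card_linearIndependent (K := K) (V := W.1) (by rw [W.2.1]), hK, W.2.1,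
        ← Fin.prod_univ_eq_prod_range]
    rw [Finset.sum_congr rfl fun W _ => h2 W, Finset.sum_const, Finset.card_univ,
      ← Nat.card_eq_fintype_card, smul_eq_mul]
  have hncard : {W : Submodule K V | finrank K W = l ∧ Z ⊓ W = ⊥}.ncard
      = Nat.card {W : Submodule K V // P W} := (Nat.card_coe_set_eq _).symm
  rw [hncard, ← cardS', cardS]


theorem stmt_0 (q n m l : ℕ) (K : Type*) [Field K] [Fintype K] (hK : Fintype.card K = q)
    (V : Type*) [AddCommGroup V] [Module K V] [FiniteDimensional K V]
    (hV : finrank K V = n) (Z : Submodule K V) (hZ : finrank K Z = m)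
    (hl : 1 ≤ l) (hml : m + l ≤ n) :
    {W : Submodule K V | finrank K W = l ∧ Z ⊓ W = ⊥}.ncard
      = q ^ (l * m) * gbinom q (n - m) l := by
  have hq : 2 ≤ q := by rw [← hK]; exact Fintype.one_lt_card
  have hm : m ≤ n := by
    rw [← hZ, ← hV]
    exact Submodule.finrank_le Z
  have hld : l ≤ n - m := by omega
  have hApos : 0 < ∏ i ∈ Finset.range l, (q ^ l - q ^ i) := by
    apply Finset.prod_pos
    intro i hi
    have h1 : i < l := Finset.mem_range.mp hi
    have h2 : q ^ i < q ^ l := Nat.pow_lt_pow_right (by omega) h1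
    omega
  apply Nat.eq_of_mul_eq_mul_right hApos
  rw [stmt_0' q n m l K hK V hV Z hZ hl hml, mul_assoc, gbinom_mul_prod hq hld]
end

section
/- Let H ⊆ [V choose k] where V is an n-dimensional vector space over F_q, n ≥ 3, and k ≤ ⌊n/2⌋ − 1. Then |▽(H)| − |H| ≥ q·[n−k−1 choose 1]_q, where ▽(H) = {G ∈ [V choose k+1] : H ≤ G for some H ∈ H} is the shade of H. Moreover, equality holds if and only if H consists of a single k-dimensional subspace. -/
open Module Set

lemma gbinom_succ_one (q m : ℕ) : gbinom q (m + 1) 1 = 1 + q * gbinom q m 1 := by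
  show gbinom q m 0 + q ^ (0 + 1) * gbinom q m (0 + 1) = _
  simp [gbinom]

lemma gbinom_zero_one (q : ℕ) : gbinom q 0 1 = 0 := rfl

lemma gbinom_one_mul (q : ℕ) (hq : 1 ≤ q) (m : ℕ) :
    gbinom q m 1 * (q - 1) + 1 = q ^ m := by
  induction m with
  | zero => simp [gbinom_zero_one]
  | succ m ih =>
    obtain ⟨s, rfl⟩ : ∃ s, q = s + 1 := ⟨q - 1, by omega⟩
    rw [gbinom_succ_one, pow_succ]
    simp only [Nat.add_sub_cancel] at *
    nlinarith [ih]

lemma gbinom_one_mono (q : ℕ) (hq : 1 ≤ q) : Monotone (fun m => gbinom q m 1) := by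
  apply monotone_nat_of_le_succ
  intro m
  rw [gbinom_succ_one]
  nlinarith [Nat.zero_le (gbinom q m 1)]

lemma gbinom_one_pos (q m : ℕ) (hm : 1 ≤ m) : 1 ≤ gbinom q m 1 := by
  obtain ⟨s, rfl⟩ : ∃ s, m = s + 1 := ⟨m - 1, by omega⟩
  rw [gbinom_succ_one]; omega

section
variable {K : Type*} [Field K] [Fintype K] {q : ℕ}

lemma nat_card_module (hK : Fintype.card K = q) (W : Type*) [AddCommGroup W] [Module K W]
    [FiniteDimensional K W] : Nat.card W = q ^ finrank K W := by
  haveI : Finite W := Module.finite_of_finite K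
  haveI : Fintype W := Fintype.ofFinite W
  rw [Nat.card_eq_fintype_card, card_eq_pow_finrank (K := K) (V := W), hK]

lemma ncard_lines_mul (hK : Fintype.card K = q) (W : Type*) [AddCommGroup W] [Module K W]
    [FiniteDimensional K W] :
    Nat.card {L : Submodule K W // finrank K L = 1} * (q - 1) = q ^ finrank K W - 1 := by
  classical
  haveI : Finite W := Module.finite_of_finite K
  haveI : Fintype W := Fintype.ofFinite W
  haveI : Finite (Submodule K W) :=
    Finite.of_injective (fun L => (L : Set W)) SetLike.coe_injective
  haveI : Fintype (Submodule K W) := Fintype.ofFinite _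
  set lines : Finset (Submodule K W) := Finset.univ.filter (fun L => finrank K L = 1) with hlines
  set S : Finset W := Finset.univ.filter (fun v => v ≠ 0) with hS
  have hmem : ∀ v ∈ S, Submodule.span K {v} ∈ lines := by
    intro v hv
    simp only [hS, Finset.mem_filter, Finset.mem_univ, true_and] at hv
    simp only [hlines, Finset.mem_filter, Finset.mem_univ, true_and]
    exact finrank_span_singleton hv
  have hcount := Finset.card_eq_sum_card_fiberwise hmem
  have hfiber : ∀ L ∈ lines, (S.filter (fun v => Submodule.span K {v} = L)).card = q - 1 := by
    intro L hL
    simp only [hlines, Finset.mem_filter, Finset.mem_univ, true_and] at hL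
    have heq : S.filter (fun v => Submodule.span K {v} = L)
        = (Finset.univ.filter (fun v => v ∈ L)).erase 0 := by
      ext v
      simp only [hS, Finset.mem_filter, Finset.filter_filter, Finset.mem_erase, Finset.mem_univ,
        true_and, Finset.mem_filter]
      constructor
      · rintro ⟨hv0, rfl⟩
        exact ⟨hv0, Submodule.mem_span_singleton_self v⟩
      · rintro ⟨hv0, hvL⟩
        refine ⟨hv0, ?_⟩
        apply Submodule.eq_of_le_of_finrank_le
        · rwa [Submodule.span_le, Set.singleton_subset_iff]
        · rw [hL, finrank_span_singleton hv0]
    rw [heq, Finset.card_erase_of_mem (by simp [Submodule.zero_mem])]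
    have : (Finset.univ.filter (fun v => v ∈ L)).card = q := by
      have h1 : (Finset.univ.filter (fun v => v ∈ L)).card = Fintype.card {v : W // v ∈ L} :=
        (Fintype.card_subtype _).symm
      have h2 : (Fintype.card {v : W // v ∈ L} : ℕ) = Nat.card {v : W // v ∈ L} :=
        (Nat.card_eq_fintype_card).symm
      have h3 : Nat.card {v : W // v ∈ L} = q ^ finrank K L := nat_card_module hK L
      rw [h1, h2, h3, hL, pow_one]
    omega
  have hScard : S.card = q ^ finrank K W - 1 := by
    have : S = Finset.univ.erase 0 := by
      ext v; simp [hS, eq_comm]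
    have hW : Fintype.card W = q ^ finrank K W := by
      rw [← Nat.card_eq_fintype_card]; exact nat_card_module hK W
    rw [this, Finset.card_erase_of_mem (Finset.mem_univ 0), Finset.card_univ, hW]
  have hsum : ∑ L ∈ lines, (S.filter (fun v => Submodule.span K {v} = L)).card
      = lines.card * (q - 1) := by
    rw [Finset.sum_congr rfl hfiber, Finset.sum_const, smul_eq_mul]
  have hlcard : Nat.card {L : Submodule K W // finrank K L = 1} = lines.card := by
    rw [Nat.card_eq_fintype_card, Fintype.card_subtype]
  rw [hlcard, ← hsum, ← hcount, hScard]

lemma ncard_lines (hK : Fintype.card K = q) (W : Type*) [AddCommGroup W] [Module K W]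
    [FiniteDimensional K W] :
    Nat.card {L : Submodule K W // finrank K L = 1} = gbinom q (finrank K W) 1 := by
  have hq : 1 ≤ q := by rw [← hK]; exact Fintype.card_pos
  have h1 := ncard_lines_mul hK W
  have h2 := gbinom_one_mul q hq (finrank K W)
  have hq1 : 1 ≤ q ^ finrank K W := Nat.one_le_pow _ _ (by omega)
  rcases Nat.eq_or_lt_of_le hq with hq' | hq'
  ·
    have : 2 ≤ q := by rw [← hK]; exact Fintype.one_lt_card
    omega
  · have : Nat.card {L : Submodule K W // finrank K L = 1} * (q-1) = gbinom q (finrank K W) 1 * (q-1) := by omega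
    exact Nat.eq_of_mul_eq_mul_right (by omega) this
end
section
variable {K : Type*} [Field K] [Fintype K] {q : ℕ}
variable {V : Type*} [AddCommGroup V] [Module K V] [FiniteDimensional K V]

lemma finrank_eq_map_add (A G : Submodule K V) (h : A ≤ G) :
    finrank K G = finrank K (G.map A.mkQ) + finrank K A := by
  have h1 := LinearMap.finrank_range_add_finrank_ker (A.mkQ.domRestrict G)
  rw [LinearMap.range_domRestrict, LinearMap.ker_domRestrict, Submodule.ker_mkQ] at h1
  rw [← h1, (Submodule.comapSubtypeEquivOfLe h).finrank_eq]

lemma card_supersets (hK : Fintype.card K = q) (A : Submodule K V) {k : ℕ}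
    (hA : finrank K A = k) :
    Nat.card {G : Submodule K V // finrank K G = k + 1 ∧ A ≤ G}
      = gbinom q (finrank K V - k) 1 := by
  have hfr : finrank K (V ⧸ A) = finrank K V - k := by
    have := A.finrank_quotient_add_finrank
    omega
  have e : {G : Submodule K V // finrank K G = k + 1 ∧ A ≤ G}
      ≃ {L : Submodule K (V ⧸ A) // finrank K L = 1} := by
    refine ⟨fun G => ⟨G.1.map A.mkQ, ?_⟩, fun L => ⟨Submodule.comap A.mkQ L.1, ?_, ?_⟩, ?_, ?_⟩
    · have := finrank_eq_map_add A G.1 G.2.2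
      have h1 := G.2.1
      omega
    · have hle : A ≤ Submodule.comap A.mkQ L.1 := by
        intro x hx
        simp only [Submodule.mem_comap]
        have : A.mkQ x = 0 := by
          rw [← LinearMap.mem_ker, Submodule.ker_mkQ]; exact hx
        rw [this]; exact L.1.zero_mem
      have := finrank_eq_map_add A _ hle
      rw [Submodule.map_comap_eq_of_surjective A.mkQ_surjective, L.2] at this
      omega
    · intro x hx
      simp only [Submodule.mem_comap]
      have : A.mkQ x = 0 := by
        rw [← LinearMap.mem_ker, Submodule.ker_mkQ]; exact hx
      rw [this]; exact L.1.zero_mem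
    · rintro ⟨G, hG1, hG2⟩
      ext1
      simp only
      rw [Submodule.comap_map_eq, Submodule.ker_mkQ, sup_eq_left.mpr hG2]
    · rintro ⟨L, hL⟩
      ext1
      simp only
      exact Submodule.map_comap_eq_of_surjective A.mkQ_surjective L
  rw [Nat.card_congr e, ncard_lines hK, hfr]

lemma card_subsets_le (hK : Fintype.card K = q) (G : Submodule K V) {k : ℕ}
    (hG : finrank K G = k + 1) :
    Nat.card {A : Submodule K V // finrank K A = k ∧ A ≤ G} ≤ gbinom q (k + 1) 1 := by
  classical
  haveI : Finite K := Fintype.finite inferInstance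
  haveI : Finite V := Module.finite_of_finite K
  haveI : Finite (Submodule K (Module.Dual K G)) := by
    haveI : Finite (Module.Dual K G) := Module.finite_of_finite K
    exact Finite.of_injective (fun L => (L : Set (Module.Dual K G))) SetLike.coe_injective
  have key : ∀ A : {A : Submodule K V // finrank K A = k ∧ A ≤ G},
      finrank K ((Submodule.comap G.subtype A.1).dualAnnihilator) = 1 := by
    rintro ⟨A, hA, hAG⟩
    have h1 : finrank K (Submodule.comap G.subtype A) = k := by
      rw [(Submodule.comapSubtypeEquivOfLe hAG).finrank_eq, hA]
    have h2 : finrank K (↥G ⧸ Submodule.comap G.subtype A)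
        + finrank K (Submodule.comap G.subtype A) = finrank K ↥G :=
      (Submodule.comap G.subtype A).finrank_quotient_add_finrank
    have h3 : finrank K (↥G ⧸ Submodule.comap G.subtype A)
        = finrank K (Submodule.comap G.subtype A).dualAnnihilator :=
      (Subspace.quotEquivAnnihilator (Submodule.comap G.subtype A)).finrank_eq
    rw [← h3]
    omega
  have hinj : Function.Injective
      (fun A : {A : Submodule K V // finrank K A = k ∧ A ≤ G} =>
        (⟨(Submodule.comap G.subtype A.1).dualAnnihilator, key A⟩
          : {L : Submodule K (Module.Dual K G) // finrank K L = 1})) := by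
    rintro ⟨A, hA, hAG⟩ ⟨B, hB, hBG⟩ hab
    simp only [Subtype.mk_eq_mk, Subspace.dualAnnihilator_inj] at hab
    have : Submodule.map G.subtype (Submodule.comap G.subtype A)
        = Submodule.map G.subtype (Submodule.comap G.subtype B) := by rw [hab]
    rw [Submodule.map_comap_subtype, Submodule.map_comap_subtype,
      inf_eq_right.mpr hAG, inf_eq_right.mpr hBG] at this
    exact Subtype.ext this
  calc Nat.card {A : Submodule K V // finrank K A = k ∧ A ≤ G}
      ≤ Nat.card {L : Submodule K (Module.Dual K G) // finrank K L = 1} :=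
        Nat.card_le_card_of_injective _ hinj
    _ = gbinom q (finrank K (Module.Dual K G)) 1 := ncard_lines hK _
    _ = gbinom q (k + 1) 1 := by rw [Subspace.dual_finrank_eq, hG]
end

theorem stmt_10 (q n k : ℕ) (K : Type*) [Field K] [Fintype K] (hK : Fintype.card K = q)
    (V : Type*) [AddCommGroup V] [Module K V] [FiniteDimensional K V]
    (hV : finrank K V = n) (hn : 3 ≤ n) (hk : k ≤ n / 2 - 1)
    (H : Set (Submodule K V)) (hH : ∀ A ∈ H, finrank K A = k) (hne : H.Nonempty) :
    (({G : Submodule K V | finrank K G = k + 1 ∧ ∃ A ∈ H, A ≤ G}.ncard : ℤ) - (H.ncard : ℤ)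
        ≥ (q : ℤ) * (gbinom q (n - k - 1) 1 : ℤ))
    ∧ (({G : Submodule K V | finrank K G = k + 1 ∧ ∃ A ∈ H, A ≤ G}.ncard : ℤ) - (H.ncard : ℤ)
          = (q : ℤ) * (gbinom q (n - k - 1) 1 : ℤ)
        ↔ ∃ U : Submodule K V, finrank K U = k ∧ H = {U}) := by
  classical
  haveI : Finite V := Module.finite_of_finite K
  haveI : Finite (Submodule K V) :=
    Finite.of_injective (fun L => (L : Set V)) SetLike.coe_injective
  have hq2 : 2 ≤ q := by rw [← hK]; exact Fintype.one_lt_card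
  have hkn : 2 * k + 2 ≤ n := by omega
  set g := gbinom q (n - k - 1) 1 with hg
  set M := gbinom q (n - k) 1 with hM
  set c := gbinom q (k + 1) 1 with hc
  have hMg : M = 1 + q * g := by
    rw [hM, hg, show n - k = (n - k - 1) + 1 by omega, gbinom_succ_one]
    congr 3
  have hc1 : 1 ≤ c := gbinom_one_pos q _ (by omega)
  have hMc : 2 * c + 1 ≤ M := by
    have h1 : gbinom q (k + 2) 1 ≤ M := gbinom_one_mono q (by omega) (by omega : k + 2 ≤ n - k)
    have h2 : gbinom q (k + 2) 1 = 1 + q * c := gbinom_succ_one q (k + 1)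
    nlinarith
  set shade := {G : Submodule K V | finrank K G = k + 1 ∧ ∃ A ∈ H, A ≤ G} with hshade
  have hSA' : ∀ A : Submodule K V, finrank K A = k →
      {G : Submodule K V | finrank K G = k + 1 ∧ A ≤ G}.ncard = M := by
    intro A hAk
    rw [← Nat.card_coe_set_eq]
    have h1 : Nat.card {G : Submodule K V // finrank K G = k + 1 ∧ A ≤ G}
        = gbinom q (finrank K V - k) 1 := card_supersets hK A hAk
    rw [hV] at h1
    exact h1
  have hHfin : H.Finite := Set.toFinite H
  have hshadefin : shade.Finite := Set.toFinite _
  set S := hHfin.toFinset with hSdef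
  set T := hshadefin.toFinset with hTdef
  have hH_ncard : H.ncard = S.card := Set.ncard_eq_toFinset_card _ hHfin
  have hsh_ncard : shade.ncard = T.card := Set.ncard_eq_toFinset_card _ hshadefin
  -- double counting
  have hcount : H.ncard * M ≤ shade.ncard * c := by
    rw [hH_ncard, hsh_ncard]
    have hrow : ∀ A ∈ S, M ≤ (T.filter (fun G => A ≤ G)).card := by
      intro A hA
      rw [Set.Finite.mem_toFinset] at hA
      have hsub : {G : Submodule K V | finrank K G = k + 1 ∧ A ≤ G}
          ⊆ ↑(T.filter (fun G => A ≤ G)) := by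
        intro G hG
        simp only [Finset.coe_filter, Set.mem_setOf_eq, hTdef, Set.Finite.mem_toFinset]
        exact ⟨⟨hG.1, A, hA, hG.2⟩, hG.2⟩
      have h1 := Set.ncard_le_ncard hsub (Set.toFinite _)
      rwa [hSA' A (hH A hA), Set.ncard_coe_finset] at h1
    have hcol : ∀ G ∈ T, (S.filter (fun A => A ≤ G)).card ≤ c := by
      intro G hG
      rw [Set.Finite.mem_toFinset] at hG
      have hsub : ↑(S.filter (fun A => A ≤ G))
          ⊆ {A : Submodule K V | finrank K A = k ∧ A ≤ G} := by
        intro A hA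
        simp only [Finset.coe_filter, Set.mem_setOf_eq, hSdef, Set.Finite.mem_toFinset] at hA
        exact ⟨hH A hA.1, hA.2⟩
      have h1 := Set.ncard_le_ncard hsub (Set.toFinite _)
      rw [Set.ncard_coe_finset] at h1
      have h2 : {A : Submodule K V | finrank K A = k ∧ A ≤ G}.ncard ≤ c := by
        rw [← Nat.card_coe_set_eq]
        exact card_subsets_le hK G hG.1
      omega
    calc S.card * M = ∑ _A ∈ S, M := by rw [Finset.sum_const, smul_eq_mul]
      _ ≤ ∑ A ∈ S, (T.filter (fun G => A ≤ G)).card := Finset.sum_le_sum hrow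
      _ = ∑ A ∈ S, ∑ G ∈ T, if A ≤ G then 1 else 0 := by
          simp_rw [Finset.card_filter]
      _ = ∑ G ∈ T, ∑ A ∈ S, if A ≤ G then 1 else 0 := Finset.sum_comm
      _ = ∑ G ∈ T, (S.filter (fun A => A ≤ G)).card := by
          simp_rw [Finset.card_filter]
      _ ≤ ∑ _G ∈ T, c := Finset.sum_le_sum hcol
      _ = T.card * c := by rw [Finset.sum_const, smul_eq_mul]
  -- two distinct elements bound
  have htwo : ∀ A ∈ H, ∀ B ∈ H, A ≠ B → 2 * M ≤ shade.ncard + 1 := by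
    intro A hA B hB hAB
    set SA := {G : Submodule K V | finrank K G = k + 1 ∧ A ≤ G} with hSAdef
    set SB := {G : Submodule K V | finrank K G = k + 1 ∧ B ≤ G} with hSBdef
    have hACard : SA.ncard = M := hSA' A (hH A hA)
    have hBCard : SB.ncard = M := hSA' B (hH B hB)
    have hABne : A ⊔ B ≠ A := by
      intro h
      apply hAB
      have hBA : B ≤ A := by rw [← h]; exact le_sup_right
      exact (Submodule.eq_of_le_of_finrank_le hBA (le_of_eq (by rw [hH A hA, hH B hB]))).symm
    have hlt : k < finrank K ↥(A ⊔ B) := by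
      have h1 := Submodule.finrank_lt_finrank_of_lt
        (lt_of_le_of_ne (le_sup_left : A ≤ A ⊔ B) (Ne.symm hABne))
      rwa [hH A hA] at h1
    have hint : (SA ∩ SB).ncard ≤ 1 := by
      rw [Set.ncard_le_one_iff]
      rintro G1 G2 ⟨⟨hG1k, hG1A⟩, _, hG1B⟩ ⟨⟨hG2k, hG2A⟩, _, hG2B⟩
      have e1 : A ⊔ B = G1 :=
        Submodule.eq_of_le_of_finrank_le (sup_le hG1A hG1B) (by rw [hG1k]; omega)
      have e2 : A ⊔ B = G2 :=
        Submodule.eq_of_le_of_finrank_le (sup_le hG2A hG2B) (by rw [hG2k]; omega)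
      rw [← e1, ← e2]
    have hunion := Set.ncard_union_add_ncard_inter SA SB (Set.toFinite _) (Set.toFinite _)
    have hsub : SA ∪ SB ⊆ shade := by
      rintro G (⟨h1, h2⟩ | ⟨h1, h2⟩)
      · exact ⟨h1, A, hA, h2⟩
      · exact ⟨h1, B, hB, h2⟩
    have hle := Set.ncard_le_ncard hsub (Set.toFinite _)
    omega
  have hHpos : 1 ≤ H.ncard := (Set.ncard_pos (Set.toFinite _)).mpr hne
  -- key natural-number statement
  have KEY : H.ncard + q * g ≤ shade.ncard ∧
      (shade.ncard = H.ncard + q * g ↔ ∃ U : Submodule K V, finrank K U = k ∧ H = {U}) := by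
    by_cases hone : H.ncard = 1
    · obtain ⟨A, hHA⟩ := Set.ncard_eq_one.mp hone
      have hAmem : A ∈ H := by rw [hHA]; exact rfl
      have hAk : finrank K A = k := hH A hAmem
      have hshc : shade.ncard = M := by
        have heq : shade = {G : Submodule K V | finrank K G = k + 1 ∧ A ≤ G} := by
          ext G
          simp [hshade, hHA]
        rw [heq]
        exact hSA' A hAk
      refine ⟨by omega, ⟨fun _ => ⟨A, hAk, hHA⟩, fun _ => by omega⟩⟩
    · have h2 : 2 ≤ H.ncard := by omega
      have hstrict : H.ncard + M ≤ shade.ncard := by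
        by_cases hsmall : H.ncard ≤ M - 1
        · obtain ⟨A, B, hA, hB, hAB⟩ :=
            (Set.one_lt_ncard_iff (Set.toFinite _)).mp (by omega : 1 < H.ncard)
          have := htwo A hA B hB hAB
          omega
        · have hbig : M ≤ H.ncard := by omega
          have hmul : (H.ncard + M) * c ≤ H.ncard * M := by nlinarith
          have hfin : (H.ncard + M) * c ≤ shade.ncard * c := le_trans hmul hcount
          exact Nat.le_of_mul_le_mul_right hfin (by omega)
      refine ⟨by omega, ⟨fun heq => absurd heq (by omega), ?_⟩⟩
      rintro ⟨U, hU, hHU⟩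
      exact absurd (by rw [hHU, Set.ncard_singleton]) hone
  obtain ⟨KEY1, KEY2⟩ := KEY
  have hcast : (q : ℤ) * (g : ℤ) = ((q * g : ℕ) : ℤ) := by push_cast; ring
  constructor
  · rw [ge_iff_le, hcast]
    have h1 : ((H.ncard + q * g : ℕ) : ℤ) ≤ (shade.ncard : ℤ) := by exact_mod_cast KEY1
    push_cast at h1 ⊢
    linarith
  · rw [hcast]
    constructor
    · intro h
      apply KEY2.mp
      have : ((shade.ncard : ℕ) : ℤ) = ((H.ncard + q * g : ℕ) : ℤ) := by push_cast; linarith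
      exact_mod_cast this
    · intro h
      have := KEY2.mpr h
      rw [this]
      push_cast
      ring
end

section
/- Let V be an n-dimensional vector space over F_q with n > 1, and let F ⊆ L(V) be an antichain (no member is a proper subspace of another, and all members distinct). Then |F| ≤ [n choose ⌊n/2⌋]_q, with equality if and only if F = [V choose ⌊n/2⌋] or F = [V choose ⌈n/2⌉]. -/
/-!
Count ordered bases `b : Fin n → V`. Each one determines the complete flag of its initial spans
`spanFirst K 0 b ≤ ⋯ ≤ spanFirst K n b`, and an antichain contains at most one member of that flag.
A `k`-dimensional subspace is the `k`-th member of the flag of exactly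
`adaptedCount q n k = |GL_n(𝔽_q)| / [n choose k]_q` bases, so summing over `F` gives the
q-LYM inequality `∑_{A ∈ F} 1 / [n choose dim A]_q ≤ 1`, and unimodality of `k ↦ [n choose k]_q`
gives the bound.

In the case of equality every member of `F` has dimension `⌊n/2⌋` or `⌈n/2⌉`, and the flag of
every basis meets `F`. For `n = 2t + 1` this means that of a `t`-space and a `(t + 1)`-space
containing it exactly one lies in `F`; hence two `t`-spaces inside a common `(t + 1)`-space are
both in `F` or both not, and connectedness of the Grassmann graph spreads this to a whole layer.
-/
open Module Set

open Submodule

-- `|GL_m(𝔽_q)|`, the number of ordered bases of `𝔽_q^m`.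
def glCount (q m : ℕ) : ℕ := ∏ i ∈ Finset.range m, (q ^ m - q ^ i)

-- The number of ordered bases of `𝔽_q^n` whose first `k` vectors span a given `k`-dimensional
-- subspace: a basis of the subspace, then `n - k` vectors independent modulo it.
def adaptedCount (q n k : ℕ) : ℕ := glCount q k * glCount q (n - k) * q ^ (k * (n - k))

section Numerics

variable {q : ℕ}

lemma glCount_succ (m : ℕ) : glCount q (m + 1) = (q ^ (m + 1) - 1) * q ^ m * glCount q m := by
  have h : ∀ i, q ^ (m + 1) - q ^ (i + 1) = q * (q ^ m - q ^ i) := fun i => by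
    rw [Nat.mul_sub, pow_succ', pow_succ']
  rw [glCount, glCount, Finset.prod_range_succ', Finset.prod_congr rfl fun i _ => h i,
    Finset.prod_mul_distrib, Finset.prod_const, Finset.card_range, pow_zero]
  ring

lemma glCount_pos (hq : 2 ≤ q) (m : ℕ) : 0 < glCount q m :=
  Finset.prod_pos fun _ hi => Nat.sub_pos_of_lt
    (Nat.pow_lt_pow_right hq (Finset.mem_range.mp hi))

lemma adaptedCount_pos (hq : 2 ≤ q) (n k : ℕ) : 0 < adaptedCount q n k := by
  have := glCount_pos hq k
  have := glCount_pos hq (n - k)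
  have : 0 < q ^ (k * (n - k)) := by positivity
  unfold adaptedCount
  positivity

lemma adaptedCount_succ_succ {n k : ℕ} (hk : k ≤ n) :
    adaptedCount q (n + 1) (k + 1) = (q ^ (k + 1) - 1) * q ^ n * adaptedCount q n k := by
  obtain ⟨d, rfl⟩ := Nat.exists_eq_add_of_le hk
  simp only [adaptedCount, glCount_succ, Nat.add_sub_add_right, Nat.add_sub_cancel_left]
  ring

lemma adaptedCount_succ_succ_of_lt {n k : ℕ} (hk : k < n) :
    adaptedCount q (n + 1) (k + 1) = (q ^ (n - k) - 1) * q ^ n * adaptedCount q n (k + 1) := by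
  obtain ⟨d, rfl⟩ := Nat.exists_eq_add_of_lt hk
  simp only [adaptedCount, show k + d + 1 + 1 - (k + 1) = d + 1 by omega,
    show k + d + 1 - (k + 1) = d by omega, show k + d + 1 - k = d + 1 by omega, glCount_succ]
  ring

lemma gbinom_eq_zero_of_lt : ∀ {n k : ℕ}, n < k → gbinom q n k = 0
  | 0, _ + 1, _ => rfl
  | n + 1, k + 1, h => by
    rw [gbinom, gbinom_eq_zero_of_lt (by omega : n < k),
      gbinom_eq_zero_of_lt (by omega : n < k + 1), mul_zero, add_zero]

theorem gbinom_mul_adaptedCount (hq : 1 ≤ q) :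
    ∀ {n k : ℕ}, k ≤ n → gbinom q n k * adaptedCount q n k = glCount q n
  | n, 0, _ => by cases n <;> simp [gbinom, adaptedCount, glCount]
  | n + 1, k + 1, hk => by
    have hkn : k ≤ n := Nat.le_of_succ_le_succ hk
    have ih := gbinom_mul_adaptedCount hq hkn
    have hfirst : gbinom q n k * adaptedCount q (n + 1) (k + 1) =
        (q ^ (k + 1) - 1) * q ^ n * glCount q n := by
      rw [adaptedCount_succ_succ hkn, ← ih]; ring
    rw [gbinom, add_mul, mul_assoc, hfirst, glCount_succ]
    rcases hkn.lt_or_eq with hlt | rfl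
    · have ih' := gbinom_mul_adaptedCount hq hlt
      have hsum : q ^ (k + 1) - 1 + q ^ (k + 1) * (q ^ (n - k) - 1) = q ^ (n + 1) - 1 := by
        rw [Nat.mul_sub_one, ← pow_add, show k + 1 + (n - k) = n + 1 by omega]
        have := Nat.one_le_pow (k + 1) q hq
        have := Nat.pow_le_pow_right hq (show k + 1 ≤ n + 1 by omega)
        omega
      rw [adaptedCount_succ_succ_of_lt hlt, ← hsum]
      linear_combination (q ^ (k + 1) * (q ^ (n - k) - 1) * q ^ n) * ih'
    · rw [gbinom_eq_zero_of_lt (Nat.lt_succ_self k)]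
      ring

lemma adaptedCount_succ_mul (hq : 1 ≤ q) {n k : ℕ} (hk : k < n) :
    adaptedCount q n (k + 1) * (q ^ (n - k) - 1) = adaptedCount q n k * (q ^ (k + 1) - 1) := by
  have h := (adaptedCount_succ_succ (q := q) hk.le).symm.trans
    (adaptedCount_succ_succ_of_lt hk)
  refine Nat.eq_of_mul_eq_mul_left (Nat.pow_pos (n := n) hq) ?_
  linear_combination h.symm

lemma adaptedCount_succ_lt (hq : 2 ≤ q) {n k : ℕ} (h : 2 * (k + 1) ≤ n) :
    adaptedCount q n (k + 1) < adaptedCount q n k := by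
  have hpow : q ^ (k + 1) < q ^ (n - k) := Nat.pow_lt_pow_right hq (by omega)
  have := Nat.one_le_pow (k + 1) q (by omega)
  refine Nat.lt_of_mul_lt_mul_right (a := q ^ (n - k) - 1) ?_
  rw [adaptedCount_succ_mul (by omega) (by omega)]
  exact Nat.mul_lt_mul_of_pos_left (by omega) (adaptedCount_pos hq n k)

lemma adaptedCount_lt_succ (hq : 2 ≤ q) {n k : ℕ} (h : n ≤ 2 * k) (hk : k < n) :
    adaptedCount q n k < adaptedCount q n (k + 1) := by
  have hpow : q ^ (n - k) < q ^ (k + 1) := Nat.pow_lt_pow_right hq (by omega)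
  have := Nat.one_le_pow (n - k) q (by omega)
  refine Nat.lt_of_mul_lt_mul_right (a := q ^ (n - k) - 1) ?_
  rw [adaptedCount_succ_mul (by omega) hk]
  exact Nat.mul_lt_mul_of_pos_left (by omega) (adaptedCount_pos hq n k)

lemma adaptedCount_strictAntiOn (hq : 2 ≤ q) (n : ℕ) :
    StrictAntiOn (adaptedCount q n) (Set.Iic (n / 2)) :=
  strictAntiOn_Iic_of_succ_lt fun m hm => adaptedCount_succ_lt hq (by omega)

lemma adaptedCount_strictMonoOn (hq : 2 ≤ q) (n : ℕ) :
    StrictMonoOn (adaptedCount q n) (Set.Icc ((n + 1) / 2) n) :=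
  strictMonoOn_of_lt_succ Set.ordConnected_Icc fun m _ hm hm' =>
    adaptedCount_lt_succ hq (by simp at hm; omega) (by simp at hm'; omega)

lemma adaptedCount_half_succ (hq : 2 ≤ q) (n : ℕ) :
    adaptedCount q n ((n + 1) / 2) = adaptedCount q n (n / 2) := by
  rcases Nat.even_or_odd' n with ⟨t, rfl | rfl⟩
  · rw [show (2 * t + 1) / 2 = 2 * t / 2 by omega]
  · have h := adaptedCount_succ_mul (by omega : 1 ≤ q) (show t < 2 * t + 1 by omega)
    rw [show 2 * t + 1 - t = t + 1 by omega] at h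
    rw [show (2 * t + 1 + 1) / 2 = t + 1 by omega, show (2 * t + 1) / 2 = t by omega]
    exact Nat.eq_of_mul_eq_mul_right (Nat.sub_pos_of_lt (Nat.one_lt_pow (by omega) hq)) h

lemma adaptedCount_half_lt (hq : 2 ≤ q) {n k : ℕ} (hk : k ≤ n) (h₁ : k ≠ n / 2)
    (h₂ : k ≠ (n + 1) / 2) : adaptedCount q n (n / 2) < adaptedCount q n k := by
  rcases lt_or_gt_of_ne h₁ with hlt | hgt
  · exact adaptedCount_strictAntiOn hq n (Set.mem_Iic.2 hlt.le) Set.self_mem_Iic hlt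
  · rw [← adaptedCount_half_succ hq n]
    exact adaptedCount_strictMonoOn hq n ⟨le_rfl, by omega⟩ ⟨by omega, hk⟩ (by omega)

lemma adaptedCount_half_le (hq : 2 ≤ q) {n k : ℕ} (hk : k ≤ n) :
    adaptedCount q n (n / 2) ≤ adaptedCount q n k := by
  by_cases h₁ : k = n / 2
  · rw [h₁]
  by_cases h₂ : k = (n + 1) / 2
  · rw [h₂, adaptedCount_half_succ hq]
  exact (adaptedCount_half_lt hq hk h₁ h₂).le

lemma gbinom_half_succ (hq : 2 ≤ q) (n : ℕ) :
    gbinom q n ((n + 1) / 2) = gbinom q n (n / 2) := by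
  refine Nat.eq_of_mul_eq_mul_right (adaptedCount_pos hq n (n / 2)) ?_
  calc gbinom q n ((n + 1) / 2) * adaptedCount q n (n / 2)
      = gbinom q n ((n + 1) / 2) * adaptedCount q n ((n + 1) / 2) := by
        rw [adaptedCount_half_succ hq]
    _ = gbinom q n (n / 2) * adaptedCount q n (n / 2) := by
        rw [gbinom_mul_adaptedCount (by omega) (by omega),
          gbinom_mul_adaptedCount (by omega) (by omega)]

section LYM

variable {n : ℕ} {ι : Type*} {s : Finset ι} {d : ι → ℕ}

theorem card_le_gbinom_half (hq : 2 ≤ q) (hd : ∀ i ∈ s, d i ≤ n)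
    (h : ∑ i ∈ s, adaptedCount q n (d i) ≤ glCount q n) : s.card ≤ gbinom q n (n / 2) := by
  refine Nat.le_of_mul_le_mul_right ?_ (adaptedCount_pos hq n (n / 2))
  calc s.card * adaptedCount q n (n / 2) = ∑ _i ∈ s, adaptedCount q n (n / 2) := by
        rw [Finset.sum_const, smul_eq_mul]
    _ ≤ ∑ i ∈ s, adaptedCount q n (d i) :=
        Finset.sum_le_sum fun i hi => adaptedCount_half_le hq (hd i hi)
    _ ≤ glCount q n := h
    _ = gbinom q n (n / 2) * adaptedCount q n (n / 2) :=
        (gbinom_mul_adaptedCount (by omega) (Nat.div_le_self n 2)).symm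

theorem sum_eq_and_half_of_card_eq_gbinom_half (hq : 2 ≤ q) (hd : ∀ i ∈ s, d i ≤ n)
    (h : ∑ i ∈ s, adaptedCount q n (d i) ≤ glCount q n) (hcard : s.card = gbinom q n (n / 2)) :
    ∑ i ∈ s, adaptedCount q n (d i) = glCount q n ∧ ∀ i ∈ s, d i = n / 2 ∨ d i = (n + 1) / 2 := by
  have hle : ∀ i ∈ s, adaptedCount q n (n / 2) ≤ adaptedCount q n (d i) :=
    fun i hi => adaptedCount_half_le hq (hd i hi)
  have hge : glCount q n ≤ ∑ _i ∈ s, adaptedCount q n (n / 2) := by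
    rw [Finset.sum_const, smul_eq_mul, hcard,
      gbinom_mul_adaptedCount (by omega) (Nat.div_le_self n 2)]
  have hsum : ∑ _i ∈ s, adaptedCount q n (n / 2) = ∑ i ∈ s, adaptedCount q n (d i) :=
    le_antisymm (Finset.sum_le_sum hle) (h.trans hge)
  refine ⟨le_antisymm h (hge.trans (Finset.sum_le_sum hle)), fun i hi => ?_⟩
  by_contra hne
  push Not at hne
  exact ((Finset.sum_eq_sum_iff_of_le hle).1 hsum i hi).not_lt
    (adaptedCount_half_lt hq (hd i hi) hne.1 hne.2)

end LYM

end Numerics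

section Flags

variable (K : Type*) {V : Type*} [Field K] [AddCommGroup V] [Module K V]

def spanFirst (r : ℕ) {n : ℕ} (b : Fin n → V) : Submodule K V :=
  span K (b '' {i | (i : ℕ) < r})

variable {K}

lemma spanFirst_mono {r r' n : ℕ} (h : r ≤ r') (b : Fin n → V) :
    spanFirst K r b ≤ spanFirst K r' b :=
  span_mono (image_mono fun _ hi => lt_of_lt_of_le hi h)

lemma spanFirst_eq_span_range {r n : ℕ} (hr : r ≤ n) (b : Fin n → V) :
    spanFirst K r b = span K (range (b ∘ Fin.castLE hr)) := by
  rw [spanFirst, range_comp]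
  congr 2
  ext i
  exact ⟨fun hi => ⟨⟨i, hi⟩, rfl⟩, by rintro ⟨j, rfl⟩; exact j.2⟩

lemma spanFirst_of_le {r n : ℕ} (hr : n ≤ r) (b : Fin n → V) :
    spanFirst K r b = span K (range b) := by
  rw [spanFirst, ← image_univ]
  congr 2
  exact eq_univ_of_forall fun i => lt_of_lt_of_le i.2 hr

lemma spanFirst_append {r k l : ℕ} (hr : r ≤ k) (u : Fin k → V) (w : Fin l → V) :
    spanFirst K r (Fin.append u w) = spanFirst K r u := by
  rw [spanFirst_eq_span_range hr, spanFirst_eq_span_range (hr.trans (Nat.le_add_right k l))]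
  congr 2
  funext i
  exact Fin.append_left u w (Fin.castLE hr i)

lemma spanFirst_comp_cast {r m n : ℕ} (h : m = n) (b : Fin n → V) :
    spanFirst K r (b ∘ Fin.cast h) = spanFirst K r b := by
  subst h
  rfl

lemma finrank_spanFirst {r n : ℕ} (hr : r ≤ n) {b : Fin n → V} (hb : LinearIndependent K b) :
    finrank K (spanFirst K r b) = r := by
  rw [spanFirst_eq_span_range hr, finrank_span_eq_card (hb.comp _ (Fin.castLE_injective hr)),
    Fintype.card_fin]

lemma linearIndependent_append_iff {k l : ℕ} {A : Submodule K V} {u : Fin k → V}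
    (hu : span K (range u) = A) {w : Fin l → V} :
    LinearIndependent K (Fin.append u w) ↔
      LinearIndependent K u ∧ LinearIndependent K (A.mkQ ∘ w) := by
  have hmkQ : LinearIndependent K (A.mkQ ∘ w) ↔
      LinearIndependent K w ∧ Disjoint (span K (range w)) A := by
    refine ⟨fun h => ⟨h.of_comp, by simpa using range_ker_disjoint h⟩, fun ⟨hw, hdisj⟩ => ?_⟩
    exact (A.mkQ.linearIndependent_iff_of_disjoint (by rwa [ker_mkQ])).2 hw
  have hinl : (Fin.append u w ∘ finSumFinEquiv) ∘ Sum.inl = u := funext fun i => by simp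
  have hinr : (Fin.append u w ∘ finSumFinEquiv) ∘ Sum.inr = w := funext fun i => by simp
  rw [← linearIndependent_equiv finSumFinEquiv, linearIndependent_sum, hinl, hinr, hmkQ, hu,
    disjoint_comm]

end Flags

section Extension

variable {K V : Type*} [Field K] [AddCommGroup V] [Module K V]

lemma exists_linearIndependent_append {k : ℕ} {u : Fin k → V} (hu : LinearIndependent K u)
    {W : Submodule K V} (huW : span K (range u) ≤ W) :
    ∀ {l : ℕ}, k + l ≤ finrank K W → ∃ w : Fin l → V,
      LinearIndependent K (Fin.append u w) ∧ span K (range (Fin.append u w)) ≤ W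
  | 0, _ => ⟨Fin.elim0, by simpa [Fin.append_right_nil] using hu, by simpa using huW⟩
  | l + 1, hl => by
    obtain ⟨w, hw, hwW⟩ := exists_linearIndependent_append hu huW (by omega : k + l ≤ _)
    have hlt : span K (range (Fin.append u w)) < W := by
      refine hwW.lt_of_ne fun h => ?_
      have := finrank_span_eq_card hw
      rw [h, Fintype.card_fin] at this
      omega
    obtain ⟨x, hxW, hx⟩ := SetLike.exists_of_lt hlt
    refine ⟨Fin.snoc w x, ?_, ?_⟩
    · rw [Fin.append_snoc]
      exact linearIndependent_finSnoc.2 ⟨hw, hx⟩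
    · rw [Fin.append_snoc, Fin.range_snoc, span_insert]
      exact sup_le (span_singleton_le_iff_mem _ _ |>.2 hxW) hwW

lemma exists_linearIndependent_span_eq (U : Submodule K V) [FiniteDimensional K U] :
    ∃ u : Fin (finrank K U) → V, LinearIndependent K u ∧ span K (range u) = U := by
  let b := Module.finBasis K U
  refine ⟨U.subtype ∘ b, b.linearIndependent.map' _ U.ker_subtype, ?_⟩
  rw [range_comp, ← map_span, b.span_eq, Submodule.map_top, range_subtype]

variable [FiniteDimensional K V]

lemma exists_linearIndependent_append_span_eq {k : ℕ} {u : Fin k → V}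
    (hu : LinearIndependent K u) {W : Submodule K V} (huW : span K (range u) ≤ W) :
    ∃ w : Fin (finrank K W - k) → V,
      LinearIndependent K (Fin.append u w) ∧ span K (range (Fin.append u w)) = W := by
  have hk : k ≤ finrank K W := by
    simpa [finrank_span_eq_card hu] using Submodule.finrank_mono huW
  obtain ⟨w, hw, hwW⟩ := exists_linearIndependent_append hu huW (l := finrank K W - k) (by omega)
  refine ⟨w, hw, eq_of_le_of_finrank_eq hwW ?_⟩
  rw [finrank_span_eq_card hw, Fintype.card_fin]
  omega

lemma exists_between_finrank_eq {U W : Submodule K V} (hUW : U ≤ W) {r : ℕ}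
    (h₁ : finrank K U ≤ r) (h₂ : r ≤ finrank K W) :
    ∃ X : Submodule K V, U ≤ X ∧ X ≤ W ∧ finrank K X = r := by
  obtain ⟨u, hu, hU⟩ := exists_linearIndependent_span_eq U
  obtain ⟨w, hw, hwW⟩ :=
    exists_linearIndependent_append hu (hU ▸ hUW) (l := r - finrank K U) (by omega)
  have hUX : U ≤ span K (range (Fin.append u w)) :=
    hU.symm.trans_le <| span_mono fun _ ⟨i, hi⟩ =>
      ⟨Fin.castAdd _ i, (Fin.append_left u w i).trans hi⟩
  refine ⟨_, hUX, hwW, ?_⟩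
  rw [finrank_span_eq_card hw, Fintype.card_fin]
  omega

lemma exists_spanFirst_eq_of_le {C D : Submodule K V} (hCD : C ≤ D) {n : ℕ}
    (hn : finrank K V = n) : ∃ b : Fin n → V, LinearIndependent K b ∧
      spanFirst K (finrank K C) b = C ∧ spanFirst K (finrank K D) b = D := by
  obtain ⟨u, hu, hC⟩ := exists_linearIndependent_span_eq C
  obtain ⟨v, hv, hD⟩ := exists_linearIndependent_append_span_eq hu (hC ▸ hCD)
  obtain ⟨w, hw, -⟩ := exists_linearIndependent_append_span_eq hv le_top
  have hCD' := Submodule.finrank_mono hCD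
  have hlen : n = finrank K C + (finrank K D - finrank K C) +
      (finrank K (⊤ : Submodule K V) - (finrank K C + (finrank K D - finrank K C))) := by
    have := D.finrank_le
    rw [finrank_top]
    omega
  refine ⟨Fin.append (Fin.append u v) w ∘ Fin.cast hlen, hw.comp _ (Fin.cast_injective hlen),
    ?_, ?_⟩
  · rw [spanFirst_comp_cast, spanFirst_append (by omega), spanFirst_append le_rfl,
      spanFirst_of_le le_rfl, hC]
  · rw [spanFirst_comp_cast, spanFirst_append (by omega), spanFirst_of_le (by omega), hD]

lemma grassmannian_connected {t : ℕ} {P : Submodule K V → Prop}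
    (hadj : ∀ C C' D : Submodule K V, finrank K C = t → finrank K C' = t →
      finrank K D = t + 1 → C ≤ D → C' ≤ D → P C → P C')
    {C C' : Submodule K V} (hC : finrank K C = t) (hC' : finrank K C' = t) (hPC : P C) :
    P C' := by
  induction hm : t - finrank K ↥(C ⊓ C') using Nat.strong_induction_on generalizing C with
  | _ m ih =>
    by_cases hle : C' ≤ C
    · rwa [eq_of_le_of_finrank_eq hle (hC'.trans hC.symm)]
    -- Replace `C` by `E ⊔ K ∙ x`, where `x ∈ C' \ C` and `E` is a hyperplane of `C` containing
    -- `C ⊓ C'`: it lies with `C` in `C ⊔ K ∙ x` and meets `C'` in one more dimension.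
    obtain ⟨x, hxC', hxC⟩ := SetLike.not_le_iff_exists.1 hle
    have hinf : finrank K ↥(C ⊓ C') < t :=
      hC' ▸ finrank_lt_finrank_of_lt (inf_le_right.lt_of_ne fun h => hle (h ▸ inf_le_left))
    obtain ⟨E, hE₁, hE₂, hE⟩ :=
      exists_between_finrank_eq (inf_le_left : C ⊓ C' ≤ C) (r := t - 1) (by omega) (by omega)
    have hxE : x ∉ E := fun h => hxC (hE₂ h)
    have hC'' : finrank K ↥(E ⊔ K ∙ x) = t := by
      rw [finrank_sup_span_singleton hxE, hE]
      omega
    have hPC'' : P (E ⊔ K ∙ x) := hadj C _ (C ⊔ K ∙ x) hC hC''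
      (by rw [finrank_sup_span_singleton hxC, hC]) le_sup_left (sup_le_sup_right hE₂ _) hPC
    refine ih _ ?_ hC'' hPC'' rfl
    have hgrow : (C ⊓ C') ⊔ K ∙ x ≤ (E ⊔ K ∙ x) ⊓ C' :=
      sup_le (le_inf (hE₁.trans le_sup_left) inf_le_right)
        (le_inf le_sup_right ((span_singleton_le_iff_mem _ _).2 hxC'))
    have h₁ := Submodule.finrank_mono hgrow
    have h₂ := Submodule.finrank_mono (inf_le_left : (E ⊔ K ∙ x) ⊓ C' ≤ E ⊔ K ∙ x)
    rw [finrank_sup_span_singleton fun h => hxC (mem_inf.1 h).1] at h₁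
    omega

end Extension

section Adapted

variable {K V : Type*} [Field K] [AddCommGroup V] [Module K V]

def adapted (n : ℕ) (A : Submodule K V) : Set (Fin n → V) :=
  {b | LinearIndependent K b ∧ spanFirst K (finrank K A) b = A}

lemma le_total_of_mem_adapted {n : ℕ} {A B : Submodule K V} {b : Fin n → V}
    (hA : b ∈ adapted n A) (hB : b ∈ adapted n B) : A ≤ B ∨ B ≤ A := by
  rcases le_total (finrank K A) (finrank K B) with h | h
  · exact Or.inl (hA.2.symm.trans_le ((spanFirst_mono h b).trans_eq hB.2))
  · exact Or.inr (hB.2.symm.trans_le ((spanFirst_mono h b).trans_eq hA.2))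

lemma biUnion_adapted_subset (n : ℕ) (s : Set (Submodule K V)) :
    ⋃ A ∈ s, adapted n A ⊆ {b : Fin n → V | LinearIndependent K b} :=
  iUnion₂_subset fun _ _ _ hb => hb.1

theorem ncard_biUnion_adapted [Finite V] {n : ℕ} {s : Finset (Submodule K V)}
    (hs : IsAntichain (· ≤ ·) (s : Set (Submodule K V))) :
    (⋃ A ∈ (s : Set (Submodule K V)), adapted n A).ncard = ∑ A ∈ s, (adapted n A).ncard := by
  rw [s.finite_toSet.ncard_biUnion (fun _ _ => toFinite _), finsum_mem_coe_finset]
  intro A hA B hB hAB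
  exact Set.disjoint_left.2 fun b hbA hbB =>
    (le_total_of_mem_adapted hbA hbB).elim (hs hA hB hAB) (hs hB hA hAB.symm)

noncomputable def linearIndependentSpanEquiv (A : Submodule K V) [FiniteDimensional K A] :
    {u : Fin (finrank K A) → A // LinearIndependent K u} ≃
      {u : Fin (finrank K A) → V // LinearIndependent K u ∧ span K (range u) = A} where
  toFun u := ⟨A.subtype ∘ u.1, u.2.map' _ A.ker_subtype, by
    rw [range_comp, ← map_span, u.2.span_eq_top_of_card_eq_finrank' (Fintype.card_fin _),
      Submodule.map_top, range_subtype]⟩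
  invFun u := ⟨fun i => ⟨u.1 i, u.2.2.le (subset_span (mem_range_self i))⟩,
    LinearIndependent.of_comp A.subtype u.2.1⟩
  left_inv _ := rfl
  right_inv _ := rfl

noncomputable def quotientProdEquiv (A : Submodule K V) : V ≃ (V ⧸ A) × A :=
  AddSubgroup.addGroupEquivQuotientProdAddSubgroup (s := A.toAddSubgroup)

lemma quotientProdEquiv_fst (A : Submodule K V) (v : V) :
    (quotientProdEquiv A v).1 = A.mkQ v :=
  rfl

noncomputable def mkQLinearIndependentEquiv (A : Submodule K V) (l : ℕ) :
    {w : Fin l → V // LinearIndependent K (A.mkQ ∘ w)} ≃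
      {z : Fin l → V ⧸ A // LinearIndependent K z} × (Fin l → A) :=
  (Equiv.subtypeEquiv ((Equiv.arrowCongr (Equiv.refl (Fin l)) (quotientProdEquiv A)).trans
    (Equiv.arrowProdEquivProdArrow (Fin l) (fun _ => V ⧸ A) (fun _ => A)))
    (q := fun p => LinearIndependent K p.1) fun w => by
      rw [show A.mkQ ∘ w = fun i => (quotientProdEquiv A (w i)).1 from
        funext fun i => (quotientProdEquiv_fst A (w i)).symm]
      rfl).trans
    (Equiv.prodSubtypeFstEquivSubtypeProd (p := fun z : Fin l → V ⧸ A => LinearIndependent K z))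

noncomputable def adaptedEquiv (A : Submodule K V) (l : ℕ) :
    adapted (finrank K A + l) A ≃
      {u : Fin (finrank K A) → V // LinearIndependent K u ∧ span K (range u) = A} ×
        {w : Fin l → V // LinearIndependent K (A.mkQ ∘ w)} :=
  (Equiv.subtypeEquiv (Fin.appendEquiv _ _) fun p => by
    change _ ↔ LinearIndependent K (Fin.append p.1 p.2) ∧
      spanFirst K (finrank K A) (Fin.append p.1 p.2) = A
    rw [spanFirst_append le_rfl, spanFirst_of_le le_rfl]
    exact ⟨fun ⟨⟨hu, hA⟩, hw⟩ => ⟨(linearIndependent_append_iff hA).2 ⟨hu, hw⟩, hA⟩,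
      fun ⟨h, hA⟩ => ⟨⟨((linearIndependent_append_iff hA).1 h).1, hA⟩,
        ((linearIndependent_append_iff hA).1 h).2⟩⟩).symm.trans Equiv.subtypeProdEquivProd

end Adapted

section Counting

variable {K V : Type*} [Field K] [Fintype K] [AddCommGroup V] [Module K V] [Finite V] {n : ℕ}

lemma card_linearIndependent_eq_glCount {W : Type*} [AddCommGroup W] [Module K W] [Finite W]
    {k : ℕ} (hW : finrank K W = k) :
    Nat.card {u : Fin k → W // LinearIndependent K u} = glCount (Fintype.card K) k := by
  subst hW
  rw [card_linearIndependent le_rfl, glCount,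
    Fin.prod_univ_eq_prod_range (fun i => Fintype.card K ^ finrank K W - Fintype.card K ^ i)]

theorem ncard_adapted (hV : finrank K V = n) (A : Submodule K V) :
    (adapted n A).ncard = adaptedCount (Fintype.card K) n (finrank K A) := by
  have : Finite (V ⧸ A) := Module.finite_of_finite K
  have : Fintype A := Fintype.ofFinite A
  obtain ⟨l, rfl⟩ := Nat.exists_eq_add_of_le (hV ▸ A.finrank_le)
  have hquot : finrank K (V ⧸ A) = l := by
    have := A.finrank_quotient_add_finrank
    omega
  have hu : Nat.card {u : Fin (finrank K A) → V // LinearIndependent K u ∧ span K (range u) = A} =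
      glCount (Fintype.card K) (finrank K A) := by
    rw [← Nat.card_congr (linearIndependentSpanEquiv A), card_linearIndependent_eq_glCount rfl]
  have hw : Nat.card {w : Fin l → V // LinearIndependent K (A.mkQ ∘ w)} =
      glCount (Fintype.card K) l * Fintype.card K ^ (finrank K A * l) := by
    rw [Nat.card_congr (mkQLinearIndependentEquiv A l), Nat.card_prod,
      card_linearIndependent_eq_glCount hquot, Nat.card_fun, Nat.card_eq_fintype_card (α := A),
      card_eq_pow_finrank (K := K) (V := A), Nat.card_fin, ← pow_mul]
  rw [← Nat.card_coe_set_eq, Nat.card_congr (adaptedEquiv A l), Nat.card_prod, hu, hw,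
    adaptedCount, Nat.add_sub_cancel_left, mul_assoc]

theorem ncard_linearIndependent (hV : finrank K V = n) :
    {b : Fin n → V | LinearIndependent K b}.ncard = glCount (Fintype.card K) n := by
  rw [← Nat.card_coe_set_eq]
  exact card_linearIndependent_eq_glCount hV

theorem sum_adaptedCount_le (hV : finrank K V = n) {s : Finset (Submodule K V)}
    (hs : IsAntichain (· ≤ ·) (s : Set (Submodule K V))) :
    ∑ A ∈ s, adaptedCount (Fintype.card K) n (finrank K A) ≤ glCount (Fintype.card K) n := by
  simp only [← ncard_adapted hV, ← ncard_biUnion_adapted hs, ← ncard_linearIndependent hV]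
  exact ncard_le_ncard (biUnion_adapted_subset n _) (toFinite _)

theorem sum_adaptedCount_eq_iff (hV : finrank K V = n) {s : Finset (Submodule K V)}
    (hs : IsAntichain (· ≤ ·) (s : Set (Submodule K V))) :
    ∑ A ∈ s, adaptedCount (Fintype.card K) n (finrank K A) = glCount (Fintype.card K) n ↔
      ∀ b : Fin n → V, LinearIndependent K b → ∃ A ∈ s, b ∈ adapted n A := by
  simp only [← ncard_adapted hV, ← ncard_biUnion_adapted hs, ← ncard_linearIndependent hV]
  constructor
  · intro h b hb
    have hb' : b ∈ {b : Fin n → V | LinearIndependent K b} := hb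
    rw [← eq_of_subset_of_ncard_le (biUnion_adapted_subset n _) h.ge (toFinite _)] at hb'
    simpa using hb'
  · intro h
    congr 1
    refine (biUnion_adapted_subset n _).antisymm fun b hb => ?_
    obtain ⟨A, hA, hbA⟩ := h b hb
    exact mem_iUnion₂.2 ⟨A, Finset.mem_coe.2 hA, hbA⟩

theorem ncard_setOf_finrank_eq (hV : finrank K V = n) {k : ℕ} (hk : k ≤ n) :
    {A : Submodule K V | finrank K A = k}.ncard = gbinom (Fintype.card K) n k := by
  have hq : 2 ≤ Fintype.card K := Fintype.one_lt_card
  obtain ⟨s, hs⟩ := (toFinite {A : Submodule K V | finrank K A = k}).exists_finset_coe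
  have hmem : ∀ A, A ∈ s ↔ finrank K A = k := fun A => by rw [← Finset.mem_coe, hs]; rfl
  have hanti : IsAntichain (· ≤ ·) (s : Set (Submodule K V)) := fun A hA B hB hAB hle =>
    hAB (eq_of_le_of_finrank_eq hle (((hmem A).1 hA).trans ((hmem B).1 hB).symm))
  have hsum := (sum_adaptedCount_eq_iff hV hanti).2 fun b hb =>
    ⟨spanFirst K k b, (hmem _).2 (finrank_spanFirst hk hb),
      hb, by rw [finrank_spanFirst hk hb]⟩
  rw [Finset.sum_congr rfl fun A hA => by rw [(hmem A).1 hA], Finset.sum_const, smul_eq_mul]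
    at hsum
  rw [← hs, ncard_coe_finset]
  refine Nat.eq_of_mul_eq_mul_right (adaptedCount_pos hq n k) ?_
  rw [hsum, gbinom_mul_adaptedCount (by omega) hk]

end Counting

section Equality

variable {K V : Type*} [Field K] [AddCommGroup V] [Module K V] [FiniteDimensional K V]

lemma mem_or_mem_of_forall_mem_adapted {n t t' : ℕ} (hV : finrank K V = n)
    {F : Set (Submodule K V)}
    (hF : ∀ b : Fin n → V, LinearIndependent K b → ∃ A ∈ F, b ∈ adapted n A)
    (hdim : ∀ A ∈ F, finrank K A = t ∨ finrank K A = t') {C D : Submodule K V} (hCD : C ≤ D)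
    (hC : finrank K C = t) (hD : finrank K D = t') : C ∈ F ∨ D ∈ F := by
  obtain ⟨b, hb, hbC, hbD⟩ := exists_spanFirst_eq_of_le hCD hV
  obtain ⟨A, hAF, -, hbA⟩ := hF b hb
  rcases hdim A hAF with h | h
  · rw [h, ← hC, hbC] at hbA
    exact Or.inl (hbA ▸ hAF)
  · rw [h, ← hD, hbD] at hbA
    exact Or.inr (hbA ▸ hAF)

theorem eq_setOf_finrank_eq_of_isAntichain {F : Set (Submodule K V)} (hF : IsAntichain (· ≤ ·) F)
    {t t' : ℕ} (ht' : t' = t ∨ t' = t + 1) (hdim : ∀ A ∈ F, finrank K A = t ∨ finrank K A = t')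
    (hcover : ∀ C D : Submodule K V, C ≤ D → finrank K C = t → finrank K D = t' → C ∈ F ∨ D ∈ F) :
    F = {A : Submodule K V | finrank K A = t} ∨ F = {A : Submodule K V | finrank K A = t'} := by
  rcases ht' with rfl | rfl
  · refine Or.inl (Set.ext fun A => ⟨fun hA => (hdim A hA).elim id id, fun hA => ?_⟩)
    exact (hcover A A le_rfl hA hA).elim id id
  have hxor : ∀ C D : Submodule K V, C ≤ D → finrank K C = t → finrank K D = t + 1 →
      (C ∈ F ↔ D ∉ F) := fun C D hCD hC hD =>
    ⟨fun hCF hDF => hF hCF hDF (fun h => by subst h; omega) hCD,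
      (hcover C D hCD hC hD).resolve_right⟩
  have hsub : ∀ D : Submodule K V, finrank K D = t + 1 → ∃ C ≤ D, finrank K C = t := by
    intro D hD
    obtain ⟨C, -, hCD, hC⟩ :=
      exists_between_finrank_eq (bot_le : ⊥ ≤ D) (r := t) (by simp) (by omega)
    exact ⟨C, hCD, hC⟩
  have hconn : ∀ C C' : Submodule K V, finrank K C = t → finrank K C' = t → C ∈ F → C' ∈ F :=
    fun C C' hC hC' => grassmannian_connected (fun C C' D hC hC' hD hCD hC'D hCF =>
      (hxor C' D hC'D hC' hD).2 ((hxor C D hCD hC hD).1 hCF)) hC hC'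
  by_cases hex : ∃ C ∈ F, finrank K C = t
  · obtain ⟨C₀, hC₀F, hC₀⟩ := hex
    refine Or.inl (Set.ext fun A => ⟨fun hA => (hdim A hA).resolve_right fun hA' => ?_,
      fun hA => hconn C₀ A hC₀ hA hC₀F⟩)
    obtain ⟨C, hCA, hC⟩ := hsub A hA'
    exact (hxor C A hCA hC hA').1 (hconn C₀ C hC₀ hC hC₀F) hA
  · push Not at hex
    refine Or.inr (Set.ext fun A => ⟨fun hA => (hdim A hA).resolve_left (hex A hA), fun hA => ?_⟩)
    obtain ⟨C, hCA, hC⟩ := hsub A hA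
    exact by_contra fun h => hex C ((hxor C A hCA hC hA).2 h) hC

end Equality

theorem stmt_14_general (q n : ℕ) (K : Type*) [Field K] [Fintype K] (hK : Fintype.card K = q)
    (V : Type*) [AddCommGroup V] [Module K V] [FiniteDimensional K V]
    (hV : finrank K V = n)
    (F : Set (Submodule K V))
    (hF : ∀ A ∈ F, ∀ B ∈ F, A ≠ B → ¬ A ≤ B) :
    F.ncard ≤ gbinom q n (n / 2)
    ∧ (F.ncard = gbinom q n (n / 2)
        ↔ F = {A : Submodule K V | finrank K A = n / 2}
          ∨ F = {A : Submodule K V | finrank K A = (n + 1) / 2}) := by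
  subst hK
  have : Finite V := Module.finite_of_finite K
  have hq : 2 ≤ Fintype.card K := Fintype.one_lt_card
  have hF : IsAntichain (· ≤ ·) F := hF
  obtain ⟨s, rfl⟩ := (toFinite F).exists_finset_coe
  have hd : ∀ A ∈ s, finrank K A ≤ n := fun A _ => hV ▸ A.finrank_le
  have hlym := sum_adaptedCount_le hV hF
  rw [ncard_coe_finset]
  refine ⟨card_le_gbinom_half hq hd hlym, fun hcard => ?_, ?_⟩
  · obtain ⟨hsum, hmid⟩ := sum_eq_and_half_of_card_eq_gbinom_half hq hd hlym hcard
    exact eq_setOf_finrank_eq_of_isAntichain hF (by omega) hmid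
      fun C D hCD hC hD => mem_or_mem_of_forall_mem_adapted hV
        ((sum_adaptedCount_eq_iff hV hF).1 hsum) hmid hCD hC hD
  · rintro (h | h) <;> rw [← ncard_coe_finset, h, ncard_setOf_finrank_eq hV (by omega)]
    exact gbinom_half_succ hq n

theorem stmt_14 (q n : ℕ) (K : Type*) [Field K] [Fintype K] (hK : Fintype.card K = q)
    (V : Type*) [AddCommGroup V] [Module K V] [FiniteDimensional K V]
    (hV : finrank K V = n) (hn : 1 < n)
    (F : Set (Submodule K V))
    (hF : ∀ A ∈ F, ∀ B ∈ F, A ≠ B → ¬ A ≤ B) :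
    F.ncard ≤ gbinom q n (n / 2)
    ∧ (F.ncard = gbinom q n (n / 2)
        ↔ F = {A : Submodule K V | finrank K A = n / 2}
          ∨ F = {A : Submodule K V | finrank K A = (n + 1) / 2}) :=
  stmt_14_general q n K hK V hV F hF
end
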